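/- Let L be a countable one-sorted first-order language and let No_L be an L-structure whose universe is the class No of all surreal numbers. Then for every cardinal μ there exists a cardinal κ with cofinality cf(κ) ≥ μ such that the set No(κ) of surreal numbers of birthday less than κ is the underlying set of an elementary substructure of No_L. In other words, there are cardinals κ of arbitrarily large cofinality such that No(κ) carries an elementary substructure of No_L. -/

import Mathlib

universe u v w

/-- Conway's pre-games (removed from Mathlib; restored with the old Mathlib definition). -/
inductive SetTheory.PGame : Type (u + 1)
  | mk : ∀ α β : Type u, (α → SetTheory.PGame) → (β → SetTheory.PGame) → SetTheory.PGame

/-- The pair `(x ≤ y, x ⧏ y)`, as in old Mathlib's `PGame.le_lf`. -/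
noncomputable def SetTheory.PGame.leLF (x : SetTheory.PGame.{u}) :
    SetTheory.PGame.{u} → Prop × Prop :=
  SetTheory.PGame.rec (motive := fun _ => SetTheory.PGame.{u} → Prop × Prop)
    (fun _ _ _ _ ihxL ihxR y =>
      SetTheory.PGame.rec (motive := fun _ => Prop × Prop)
        (fun yl yr yL yR ihyL ihyR =>
          ((∀ i, (ihxL i (SetTheory.PGame.mk yl yr yL yR)).2) ∧ ∀ j, (ihyR j).2,
            (∃ i, (ihyL i).1) ∨ ∃ j, (ihxR j (SetTheory.PGame.mk yl yr yL yR)).1)) y) x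

/-- `x ≤ y` on pre-games. -/
def SetTheory.PGame.Le (x y : SetTheory.PGame.{u}) : Prop := (SetTheory.PGame.leLF x y).1

/-- `x < y` on pre-games (old Mathlib's preorder: `x ≤ y ∧ ¬ y ≤ x`). -/
def SetTheory.PGame.Lt (x y : SetTheory.PGame.{u}) : Prop :=
  SetTheory.PGame.Le x y ∧ ¬ SetTheory.PGame.Le y x

/-- Numeric pre-games, as in old Mathlib. -/
def SetTheory.PGame.Numeric : SetTheory.PGame.{u} → Prop
  | SetTheory.PGame.mk _ _ L R =>
    (∀ i j, SetTheory.PGame.Lt (L i) (R j)) ∧ (∀ i, SetTheory.PGame.Numeric (L i)) ∧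
      ∀ j, SetTheory.PGame.Numeric (R j)

/-- The birthday of a pre-game, as in old Mathlib. -/
noncomputable def SetTheory.PGame.birthday : SetTheory.PGame.{u} → Ordinal.{u}
  | SetTheory.PGame.mk _ _ xL xR =>
    max (Ordinal.lsub.{u, u} fun i => SetTheory.PGame.birthday (xL i))
      (Ordinal.lsub.{u, u} fun i => SetTheory.PGame.birthday (xR i))

/-- The surreal numbers: numeric pre-games modulo `x ≤ y ∧ y ≤ x`, as in old Mathlib. -/
def Surreal : Type (u + 1) :=
  Quot (fun x y : {p : SetTheory.PGame.{u} // p.Numeric} =>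
    SetTheory.PGame.Le x.1 y.1 ∧ SetTheory.PGame.Le y.1 x.1)

/-- The surreal number represented by a numeric pre-game. -/
def Surreal.mk (x : SetTheory.PGame.{u}) (h : x.Numeric) : Surreal.{u} :=
  Quot.mk _ ⟨x, h⟩

open SetTheory Cardinal FirstOrder

/-- The birthday of a surreal number: the least birthday among numeric pregames
representing it. -/
noncomputable def Surreal.birthday (x : Surreal.{u}) : Ordinal.{u} :=
  sInf (SetTheory.PGame.birthday '' {p : SetTheory.PGame.{u} | ∃ h : p.Numeric, Surreal.mk p h = x})

/-!
Every initial segment `{x | birthday x ≤ o}` of `No` is a set: a surreal number is determined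
by the normal form of a representative of least birthday (options replaced, hereditarily, by
their sets of normal forms), and the normal forms of birthday `< o` form a set by induction on
`o`. Hence, as the Skolem functions of a countable language are countably many, there is a
monotone `g : Ord → Ord` bounding the birthdays of their values at arguments of birthday
`≤ o`. For a regular `c ≥ μ`, the `c`-th ordinal closed under `o ↦ (g o ⊔ o).card⁺.ord` is an
initial ordinal `κ.ord` of cofinality `c`, and `No(κ)` is closed under all Skolem functions of
`L`, hence an elementary substructure.
-/

namespace Ordinal

open Order

variable {f : Ordinal.{u} → Ordinal.{u}}

theorem apply_le_nfp_of_lt (hf : Monotone f) {a x : Ordinal.{u}} (hx : x < nfp f a) :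
    f x ≤ nfp f a := by
  obtain ⟨n, hn⟩ := lt_nfp_iff.1 hx
  calc f x ≤ f^[n + 1] a := by rw [Function.iterate_succ_apply']; exact hf hn.le
    _ ≤ nfp f a := iterate_le_nfp f a (n + 1)

theorem apply_le_deriv_of_lt (hf : Monotone f) {c x : Ordinal.{u}} (hc : IsSuccLimit c)
    (hx : x < deriv f c) : f x ≤ deriv f c := by
  obtain ⟨a, hac, hxa⟩ := ((isNormal_deriv f).lt_iff_exists_lt hc).1 hx
  calc f x ≤ deriv f (succ a) := by
        rw [deriv_succ]
        exact apply_le_nfp_of_lt hf (hxa.trans ((lt_succ _).trans_le (le_nfp _ _)))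
    _ ≤ deriv f c := (isNormal_deriv f).monotone (hc.succ_lt hac).le

theorem exists_cof_ge_forall_lt_ord_apply_lt {g : Ordinal.{u} → Ordinal.{u}}
    (hg : Monotone g) (μ : Cardinal.{u}) :
    ∃ κ : Cardinal.{u}, μ ≤ κ.ord.cof ∧ ℵ₀ ≤ κ ∧ ∀ o < κ.ord, g o < κ.ord := by
  set c := succ (μ ⊔ ℵ₀)
  have hc : c.IsRegular := Cardinal.isRegular_succ le_sup_right
  set h : Ordinal.{u} → Ordinal.{u} := fun o => (succ (g o ⊔ o).card).ord
  have hh : Monotone h := fun a b hab =>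
    Cardinal.ord_le_ord.2 (succ_le_succ (card_le_card (sup_le_sup (hg hab) hab)))
  set D := deriv h c.ord
  have hcard : ∀ o < D, (g o ⊔ o).card < D.card := fun o ho =>
    (lt_succ _).trans_le <|
      Cardinal.ord_le.1 (apply_le_deriv_of_lt hh (Cardinal.isSuccLimit_ord hc.aleph0_le) ho)
  have hDinit : D.IsInitial := le_antisymm (Cardinal.ord_card_le D) <| le_of_forall_lt fun o ho =>
    Cardinal.lt_ord.2 ((card_le_card le_sup_right).trans_lt (hcard o ho))
  have hcof : D.cof = c := by
    rw [cof_map_of_isNormal (isNormal_deriv h) (Cardinal.isSuccLimit_ord hc.aleph0_le)]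
    exact hc.cof_ord
  refine ⟨D.card, ?_, hc.aleph0_le.trans (hcof ▸ cof_le_card D), ?_⟩
  all_goals rw [hDinit.ord_card]
  · exact hcof ▸ le_sup_left.trans (le_succ _)
  · exact fun o ho => (Cardinal.lt_ord.2 ((card_le_card le_sup_left).trans_lt
      (hcard o ho))).trans_eq hDinit.ord_card

end Ordinal

namespace SetTheory.PGame

def LF (x y : PGame.{u}) : Prop := (leLF x y).2

def leftOptions : PGame.{u} → Set PGame.{u}
  | mk _ _ L _ => Set.range L

def rightOptions : PGame.{u} → Set PGame.{u}
  | mk _ _ _ R => Set.range R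

@[simp]
theorem leftOptions_mk {α β : Type u} (L : α → PGame.{u}) (R : β → PGame.{u}) :
    leftOptions (mk α β L R) = Set.range L := rfl

@[simp]
theorem rightOptions_mk {α β : Type u} (L : α → PGame.{u}) (R : β → PGame.{u}) :
    rightOptions (mk α β L R) = Set.range R := rfl

instance small_leftOptions (x : PGame.{u}) : Small.{u} (leftOptions x) := by
  cases x
  exact small_range _

instance small_rightOptions (x : PGame.{u}) : Small.{u} (rightOptions x) := by
  cases x
  exact small_range _

theorem le_iff_forall_lf (x y : PGame.{u}) :
    Le x y ↔ (∀ a ∈ leftOptions x, LF a y) ∧ ∀ b ∈ rightOptions y, LF x b := by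
  cases x; cases y
  simp only [leftOptions_mk, rightOptions_mk, Set.forall_mem_range]
  rfl

theorem lf_iff_exists_le (x y : PGame.{u}) :
    LF x y ↔ (∃ a ∈ leftOptions y, Le x a) ∨ ∃ b ∈ rightOptions x, Le b y := by
  cases x; cases y
  simp only [leftOptions_mk, rightOptions_mk, Set.exists_range_iff]
  rfl

theorem Le.refl (x : PGame.{u}) : Le x x := by
  induction x with
  | mk α β L R ihL ihR =>
    rw [le_iff_forall_lf]
    refine ⟨?_, ?_⟩
    · rintro _ ⟨i, rfl⟩
      exact (lf_iff_exists_le _ _).2 (Or.inl ⟨L i, ⟨i, rfl⟩, ihL i⟩)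
    · rintro _ ⟨j, rfl⟩
      exact (lf_iff_exists_le _ _).2 (Or.inr ⟨R j, ⟨j, rfl⟩, ihR j⟩)

theorem birthday_lt_of_mem_leftOptions {a x : PGame.{u}} (h : a ∈ leftOptions x) :
    a.birthday < x.birthday := by
  cases x with
  | mk α β L R =>
    obtain ⟨i, rfl⟩ := h
    rw [birthday]
    exact (Ordinal.lt_iSup_add_one (fun i => (L i).birthday) i).trans_le (le_max_left _ _)

theorem birthday_lt_of_mem_rightOptions {b x : PGame.{u}} (h : b ∈ rightOptions x) :
    b.birthday < x.birthday := by
  cases x with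
  | mk α β L R =>
    obtain ⟨j, rfl⟩ := h
    rw [birthday]
    exact (Ordinal.lt_iSup_add_one (fun j => (R j).birthday) j).trans_le (le_max_right _ _)

noncomputable def ofSets (S T : Set PGame.{u}) [Small.{u} S] [Small.{u} T] : PGame.{u} :=
  mk (Shrink.{u} S) (Shrink.{u} T) (fun i => ((equivShrink S).symm i).1)
    (fun j => ((equivShrink T).symm j).1)

theorem ofSets_congr {S S' T T' : Set PGame.{u}} [Small.{u} S] [Small.{u} S'] [Small.{u} T]
    [Small.{u} T'] (hS : S = S') (hT : T = T') : ofSets S T = ofSets S' T' := by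
  subst hS hT; rfl

theorem leftOptions_ofSets (S T : Set PGame.{u}) [Small.{u} S] [Small.{u} T] :
    leftOptions (ofSets S T) = S :=
  ((equivShrink S).symm.surjective.range_comp _).trans Subtype.range_coe

theorem rightOptions_ofSets (S T : Set PGame.{u}) [Small.{u} S] [Small.{u} T] :
    rightOptions (ofSets S T) = T :=
  ((equivShrink T).symm.surjective.range_comp _).trans Subtype.range_coe

/-- Hereditarily replaces the families of options by their sets of values, so that
pre-games differing only in how their options are indexed become equal. -/
noncomputable def normalize : PGame.{u} → PGame.{u}
  | mk _ _ L R =>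
    ofSets (Set.range fun i => normalize (L i)) (Set.range fun j => normalize (R j))

theorem leftOptions_normalize (x : PGame.{u}) :
    leftOptions (normalize x) = normalize '' leftOptions x := by
  cases x
  rw [normalize, leftOptions_ofSets, leftOptions_mk, ← Set.range_comp]
  rfl

theorem rightOptions_normalize (x : PGame.{u}) :
    rightOptions (normalize x) = normalize '' rightOptions x := by
  cases x
  rw [normalize, rightOptions_ofSets, rightOptions_mk, ← Set.range_comp]
  rfl

theorem le_iff_normalize_le_and_lf_iff_normalize_lf (x y : PGame.{u}) :
    (Le x y ↔ Le (normalize x) (normalize y)) ∧ (LF x y ↔ LF (normalize x) (normalize y)) := by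
  induction x generalizing y with
  | mk α β L R ihL ihR =>
  induction y with
  | mk γ δ L' R' ihL' ihR' =>
  constructor
  · rw [le_iff_forall_lf, le_iff_forall_lf (normalize _)]
    simp only [leftOptions_normalize, rightOptions_normalize, leftOptions_mk, rightOptions_mk,
      Set.forall_mem_image, Set.forall_mem_range]
    exact and_congr (forall_congr' fun i => (ihL i _).2) (forall_congr' fun j => (ihR' j).2)
  · rw [lf_iff_exists_le, lf_iff_exists_le (normalize _)]
    simp only [leftOptions_normalize, rightOptions_normalize, leftOptions_mk, rightOptions_mk,
      Set.exists_mem_image, Set.exists_range_iff]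
    exact or_congr (exists_congr fun i => (ihL' i).1) (exists_congr fun j => (ihR j _).1)

theorem le_of_normalize_eq {x y : PGame.{u}} (h : normalize x = normalize y) : Le x y := by
  rw [(le_iff_normalize_le_and_lf_iff_normalize_lf x y).1, h]
  exact Le.refl _

theorem normalize_eq_ofSets (x : PGame.{u}) :
    normalize x = ofSets (normalize '' leftOptions x) (normalize '' rightOptions x) := by
  cases x
  rw [normalize]
  simp only [leftOptions_mk, rightOptions_mk, ← Set.range_comp]
  rfl

theorem small_normalize_image_birthday_lt (o : Ordinal.{u}) :
    Small.{u} (normalize '' {x : PGame.{u} | x.birthday < o}) := by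
  induction o using WellFoundedLT.induction with
  | _ o ih =>
  let U := ⋃ b : Set.Iio o, normalize '' {x : PGame.{u} | x.birthday < b.1}
  have (b : Set.Iio o) : Small.{u} (normalize '' {x : PGame.{u} | x.birthday < b.1}) :=
    ih b.1 b.2
  have hU {x : PGame.{u}} (hx : x.birthday < o) {a : PGame.{u}} (ha : a.birthday < x.birthday) :
      normalize a ∈ U :=
    Set.mem_iUnion.2 ⟨⟨x.birthday, hx⟩, a, ha, rfl⟩
  refine small_subset (s := Set.range fun ST : Set U × Set U =>
    ofSets (Subtype.val '' ST.1) (Subtype.val '' ST.2)) ?_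
  rintro _ ⟨x, hx, rfl⟩
  refine ⟨(Subtype.val ⁻¹' (normalize '' leftOptions x),
    Subtype.val ⁻¹' (normalize '' rightOptions x)), ?_⟩
  simp only [Subtype.image_preimage_coe]
  rw [normalize_eq_ofSets]
  apply ofSets_congr
  · exact Set.inter_eq_right.2 (Set.image_subset_iff.2 fun a ha =>
      hU hx (birthday_lt_of_mem_leftOptions ha))
  · exact Set.inter_eq_right.2 (Set.image_subset_iff.2 fun b hb =>
      hU hx (birthday_lt_of_mem_rightOptions hb))

end SetTheory.PGame

namespace Surreal

theorem exists_mk_birthday_eq (x : Surreal.{u}) :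
    ∃ (p : PGame.{u}) (hp : p.Numeric), Surreal.mk p hp = x ∧ p.birthday = x.birthday := by
  obtain ⟨⟨p, hp⟩, rfl⟩ := Quot.exists_rep x
  obtain ⟨q, ⟨hq, hqx⟩, hqb⟩ := csInf_mem (⟨p.birthday, p, ⟨hp, rfl⟩, rfl⟩ :
    (PGame.birthday '' {q | ∃ h : q.Numeric, Surreal.mk q h = Quot.mk _ ⟨p, hp⟩}).Nonempty)
  exact ⟨q, hq, hqx, hqb⟩

theorem mk_eq_mk_of_normalize_eq {p q : PGame.{u}} (hp : p.Numeric) (hq : q.Numeric)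
    (h : p.normalize = q.normalize) : Surreal.mk p hp = Surreal.mk q hq :=
  Quot.sound ⟨PGame.le_of_normalize_eq h, PGame.le_of_normalize_eq h.symm⟩

instance small_birthday_le (o : Ordinal.{u}) : Small.{u} {x : Surreal.{u} // x.birthday ≤ o} := by
  have := PGame.small_normalize_image_birthday_lt (Order.succ o)
  choose p hp hpx hpb using
    fun x : {x : Surreal.{u} // x.birthday ≤ o} => exists_mk_birthday_eq x.1
  refine small_of_injective (β := PGame.normalize '' {x : PGame.{u} | x.birthday < Order.succ o})
    (f := fun x => ⟨(p x).normalize, p x, Order.lt_succ_iff.2 ((hpb x).trans_le x.2), rfl⟩) ?_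
  intro x y h
  rw [Subtype.ext_iff, ← hpx x, ← hpx y]
  exact mk_eq_mk_of_normalize_eq _ _ (congrArg Subtype.val h)

instance : Nonempty Surreal.{u} :=
  ⟨Surreal.mk (PGame.mk PEmpty PEmpty PEmpty.elim PEmpty.elim)
    ⟨fun i => i.elim, fun i => i.elim, fun j => j.elim⟩⟩

end Surreal

namespace FirstOrder.Language

variable {L : Language.{v, w}} {M : Type*} [L.Structure M]

noncomputable def funMapRankSup (rk : M → Ordinal.{u}) (o : Ordinal.{u}) : Ordinal.{u} :=
  ⨆ r : Σ f : (Σ n, L.Functions n), Fin f.1 → {x // rk x ≤ o},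
    rk (Structure.funMap r.1.2 fun i => (r.2 i : M))

section

variable (rk : M → Ordinal.{u}) [Small.{u} (Σ n, L.Functions n)]
  [∀ o, Small.{u} {x // rk x ≤ o}]

theorem rank_funMap_le_funMapRankSup {n : ℕ} (f : L.Functions n) (v : Fin n → M)
    {o : Ordinal.{u}} (hv : ∀ i, rk (v i) ≤ o) :
    rk (Structure.funMap f v) ≤ funMapRankSup (L := L) rk o :=
  Ordinal.le_iSup (fun r : Σ f : (Σ n, L.Functions n), Fin f.1 → {x // rk x ≤ o} =>
    rk (Structure.funMap r.1.2 fun i => (r.2 i : M))) ⟨⟨n, f⟩, fun i => ⟨v i, hv i⟩⟩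

theorem funMapRankSup_mono : Monotone (funMapRankSup (L := L) rk) := fun _ _ h =>
  Ordinal.iSup_le fun r => rank_funMap_le_funMapRankSup rk r.1.2 _ fun i => (r.2 i).2.trans h

theorem closedUnder_setOf_rank_lt {D : Ordinal.{u}} (hD0 : 0 < D)
    (hD : ∀ o < D, funMapRankSup (L := L) rk o < D) {n : ℕ} (f : L.Functions n) :
    ClosedUnder f {x | rk x < D} := fun v hv =>
  (rank_funMap_le_funMapRankSup rk f v fun i =>
    Finset.le_sup (f := rk ∘ v) (Finset.mem_univ i)).trans_lt
      (hD _ ((Finset.sup_lt_iff hD0).2 fun i _ => hv i))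

end

theorem exists_elementarySubstructure_setOf_rank_lt [Nonempty M] (hL : Countable L.Symbols)
    (rk : M → Ordinal.{u}) [∀ o, Small.{u} {x // rk x ≤ o}] (μ : Cardinal.{u}) :
    ∃ κ : Cardinal.{u}, μ ≤ κ.ord.cof ∧
      ∃ S : L.ElementarySubstructure M, (S : Set M) = {x | rk x < κ.ord} := by
  have : Countable (Σ n, (L.sum L.skolem₁).Functions n) := by
    refine Cardinal.mk_le_aleph0_iff.1 (card_functions_sum_skolem₁_le.trans (max_le le_rfl ?_))
    exact Cardinal.mk_le_aleph0_iff.2 hL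
  obtain ⟨κ, hμκ, hκ, hclosed⟩ :=
    Ordinal.exists_cof_ge_forall_lt_ord_apply_lt (funMapRankSup_mono (L := L.sum L.skolem₁) rk) μ
  let S : (L.sum L.skolem₁).Substructure M :=
    ⟨{x | rk x < κ.ord}, closedUnder_setOf_rank_lt rk
      (Cardinal.ord_pos.2 (Cardinal.aleph0_pos.trans_le hκ)) hclosed⟩
  exact ⟨κ, hμκ, S.elementarySkolem₁Reduct, rfl⟩

end FirstOrder.Language

/-- **Lemma 2.** Let `L` be a countable one-sorted language and `No_L` an `L`-structure with
universe the surreal numbers. Then there are cardinals `κ` of arbitrarily large cofinality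
such that `No(κ)`, the set of surreals of birthday `< κ`, is the underlying set of an
elementary substructure of `No_L`. -/
theorem exists_elementarySubstructure_noKappa (L : FirstOrder.Language.{v, w})
    (hL : Countable L.Symbols) [L.Structure Surreal.{u}] (μ : Cardinal.{u}) :
    ∃ κ : Cardinal.{u}, μ ≤ κ.ord.cof ∧
      ∃ S : L.ElementarySubstructure Surreal.{u},
        (S : Set Surreal.{u}) = {x : Surreal.{u} | Surreal.birthday x < κ.ord} :=
  L.exists_elementarySubstructure_setOf_rank_lt hL Surreal.birthday μ
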